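/- arXiv:2507.13208 — 5 statements merged into one kernel-verified Lean document; each statement's English description precedes it below -/
import Mathlib

section
/- Let ∧ be an idempotent T-norm (x ∧ x = x for all x ∈ [0,1]) and R_A a proximity relation on the alphabet A. Let t' and s' be terms containing no bvar constructor, let y ∈ V, and let r be any term. If fvar y occurs in r, then R(r[y := t'], r[y := s']) = R(t', s'); if fvar y does not occur in r, then R(r[y := t'], r[y := s']) = 1. -/
/-- Simply-typed terms over an alphabet `A` of constants and a set `V` of
free-variable names, with de Bruijn indices for bound variables. -/
inductive Term (A V : Type) : Type where
  | fvar : V → Term A V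
  | bvar : ℕ → Term A V
  | const : A → Term A V
  | app : Term A V → Term A V → Term A V
  | lam : Term A V → Term A V

/-- The lifted fuzzy relation on terms, defined from a T-norm `f` and a fuzzy
relation `RA` on the alphabet. -/
def liftR {A V : Type} [DecidableEq V]
    (f : unitInterval → unitInterval → unitInterval)
    (RA : A → A → unitInterval) : Term A V → Term A V → unitInterval
  | .fvar X, .fvar Y => if X = Y then 1 else 0
  | .bvar n, .bvar m => if n = m then 1 else 0
  | .const a, .const b => RA a b
  | .app t₁ t₂, .app s₁ s₂ => f (liftR f RA t₁ s₁) (liftR f RA t₂ s₂)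
  | .lam t, .lam s => liftR f RA t s
  | _, _ => 0

/-- Application of a substitution `σ : V → Term A V` to a term. -/
def applySubst {A V : Type} (σ : V → Term A V) : Term A V → Term A V
  | .fvar X => σ X
  | .bvar n => .bvar n
  | .const a => .const a
  | .app t₁ t₂ => .app (applySubst σ t₁) (applySubst σ t₂)
  | .lam t => .lam (applySubst σ t)

/-- A term contains no `bvar` constructor. -/
def noBvar {A V : Type} : Term A V → Prop
  | .fvar _ => True
  | .bvar _ => False
  | .const _ => True
  | .app t₁ t₂ => noBvar t₁ ∧ noBvar t₂
  | .lam t => noBvar t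

/-- Replacing every occurrence of `fvar y` in a term by `u`. -/
def substFvar {A V : Type} [DecidableEq V] (y : V) (u : Term A V) :
    Term A V → Term A V
  | .fvar X => if X = y then u else .fvar X
  | .bvar n => .bvar n
  | .const a => .const a
  | .app t₁ t₂ => .app (substFvar y u t₁) (substFvar y u t₂)
  | .lam t => .lam (substFvar y u t)

/-- `fvar y` occurs in the term. -/
def occursFvar {A V : Type} (y : V) : Term A V → Prop
  | .fvar X => X = y
  | .bvar _ => False
  | .const _ => False
  | .app t₁ t₂ => occursFvar y t₁ ∨ occursFvar y t₂
  | .lam t => occursFvar y t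

/-- Number of occurrences of `fvar y` in the term. -/
def countFvar {A V : Type} [DecidableEq V] (y : V) : Term A V → ℕ
  | .fvar X => if X = y then 1 else 0
  | .bvar _ => 0
  | .const _ => 0
  | .app t₁ t₂ => countFvar y t₁ + countFvar y t₂
  | .lam t => countFvar y t

/-- The skeleton of a term: every constant is replaced by `()`. -/
def skel {A V : Type} : Term A V → Term Unit V
  | .fvar X => .fvar X
  | .bvar n => .bvar n
  | .const _ => .const ()
  | .app t₁ t₂ => .app (skel t₁) (skel t₂)
  | .lam t => .lam (skel t)

/-- The head of a term. -/
def headT {A V : Type} : Term A V → Term A V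
  | .app t₁ _ => headT t₁
  | t => t

/-- For an idempotent T-norm and a proximity relation `RA`,
substituting similar bvar-free terms `t'` and `s'` for a variable `y` in an
arbitrary term `r` yields exactly the similarity degree of `t'` and `s'` if
`y` occurs in `r`, and degree 1 otherwise. -/
theorem liftR_subst_single_var_idempotent {A V : Type} [DecidableEq V]
    (f : unitInterval → unitInterval → unitInterval)
    (hassoc : ∀ x y z : unitInterval, f (f x y) z = f x (f y z))
    (hcomm : ∀ x y : unitInterval, f x y = f y x)
    (hmono : ∀ x y z : unitInterval, x ≤ y → f x z ≤ f y z)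
    (hone : ∀ x : unitInterval, f 1 x = x)
    (hidem : ∀ x : unitInterval, f x x = x)
    (RA : A → A → unitInterval)
    (harefl : ∀ a, RA a a = 1)
    (hasymm : ∀ a b, RA a b = RA b a)
    (t' s' : Term A V)
    (ht' : noBvar t') (hs' : noBvar s')
    (y : V) (r : Term A V) :
    (occursFvar y r →
      liftR f RA (substFvar y t' r) (substFvar y s' r) = liftR f RA t' s') ∧
    (¬ occursFvar y r →
      liftR f RA (substFvar y t' r) (substFvar y s' r) = 1) := by
  clear ht' hs'
  have hrefl : ∀ u : Term A V, liftR f RA u u = 1 := by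
    intro u
    induction u with
    | fvar X => simp [liftR]
    | bvar n => simp [liftR]
    | const a => simp [liftR, harefl]
    | app t₁ t₂ ih₁ ih₂ => simp [liftR, ih₁, ih₂, hone]
    | lam t ih => simp [liftR, ih]
  induction r with
  | fvar X =>
    by_cases h : X = y
    · subst h
      refine ⟨fun _ => ?_, fun hn => absurd rfl hn⟩
      simp [substFvar]
    · refine ⟨fun ho => absurd ho h, fun _ => ?_⟩
      simp [substFvar, h, liftR]
  | bvar n =>
    exact ⟨fun ho => absurd ho (by simp [occursFvar]), fun _ => by simp [substFvar, liftR]⟩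
  | const a =>
    exact ⟨fun ho => absurd ho (by simp [occursFvar]), fun _ => by simp [substFvar, liftR, harefl]⟩
  | app t₁ t₂ ih₁ ih₂ =>
    constructor
    · intro ho
      rcases ho with h1 | h2
      · by_cases h2 : occursFvar y t₂
        · simp [substFvar, liftR, ih₁.1 h1, ih₂.1 h2, hidem]
        · simp [substFvar, liftR, ih₁.1 h1, ih₂.2 h2, hcomm _ 1, hone]
      · by_cases h1 : occursFvar y t₁
        · simp [substFvar, liftR, ih₁.1 h1, ih₂.1 h2, hidem]
        · simp [substFvar, liftR, ih₁.2 h1, ih₂.1 h2, hone]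
    · intro hn
      rw [occursFvar] at hn
      push_neg at hn
      simp [substFvar, liftR, ih₁.2 hn.1, ih₂.2 hn.2, hone]
  | lam t ih =>
    exact ⟨fun ho => by simpa [substFvar, liftR] using ih.1 ho,
           fun hn => by simpa [substFvar, liftR] using ih.2 hn⟩
end

section
/- Let ∧ be a T-norm and R_A a proximity relation on the alphabet A. Let t' and s' be terms containing no bvar constructor, let y ∈ V, and let r be a term in which fvar y occurs exactly once. Then R(r[y := t'], r[y := s']) = R(t', s'). -/
lemma substFvar_of_count_zero {A V : Type} [DecidableEq V] (y : V) (u : Term A V) :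
    ∀ r : Term A V, countFvar y r = 0 → substFvar y u r = r := by
  intro r
  induction r with
  | fvar X =>
    intro h
    simp only [countFvar] at h
    split at h
    · exact absurd h one_ne_zero
    · simp [substFvar, *]
  | bvar n => intro _; rfl
  | const a => intro _; rfl
  | app t₁ t₂ ih₁ ih₂ =>
    intro h
    simp only [countFvar, Nat.add_eq_zero] at h
    simp [substFvar, ih₁ h.1, ih₂ h.2]
  | lam t ih =>
    intro h
    simp only [countFvar] at h
    simp [substFvar, ih h]

lemma liftR_refl {A V : Type} [DecidableEq V]
    (f : unitInterval → unitInterval → unitInterval)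
    (hone : ∀ x : unitInterval, f 1 x = x)
    (RA : A → A → unitInterval)
    (harefl : ∀ a, RA a a = 1) :
    ∀ r : Term A V, liftR f RA r r = 1 := by
  intro r
  induction r with
  | fvar X => simp [liftR]
  | bvar n => simp [liftR]
  | const a => simp [liftR, harefl]
  | app t₁ t₂ ih₁ ih₂ => simp [liftR, ih₁, ih₂, hone]
  | lam t ih => simpa [liftR] using ih

/-- For an arbitrary T-norm and a proximity relation `RA`, if
`fvar y` occurs exactly once in `r`, then substituting bvar-free terms `t'`
and `s'` for `y` yields exactly the similarity degree of `t'` and `s'`. -/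
theorem liftR_subst_linear_var {A V : Type} [DecidableEq V]
    (f : unitInterval → unitInterval → unitInterval)
    (hassoc : ∀ x y z : unitInterval, f (f x y) z = f x (f y z))
    (hcomm : ∀ x y : unitInterval, f x y = f y x)
    (hmono : ∀ x y z : unitInterval, x ≤ y → f x z ≤ f y z)
    (hone : ∀ x : unitInterval, f 1 x = x)
    (RA : A → A → unitInterval)
    (harefl : ∀ a, RA a a = 1)
    (hasymm : ∀ a b, RA a b = RA b a)
    (t' s' : Term A V)
    (ht' : noBvar t') (hs' : noBvar s')
    (y : V) (r : Term A V)
    (hcount : countFvar y r = 1) :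
    liftR f RA (substFvar y t' r) (substFvar y s' r) = liftR f RA t' s' := by
  induction r with
  | fvar X =>
    simp only [countFvar] at hcount
    split at hcount
    · subst ‹X = y›; simp [substFvar]
    · exact absurd hcount zero_ne_one
  | bvar n => exact absurd hcount zero_ne_one
  | const a => exact absurd hcount zero_ne_one
  | app t₁ t₂ ih₁ ih₂ =>
    simp only [countFvar] at hcount
    rcases Nat.add_eq_one_iff.mp hcount with ⟨h1, h2⟩ | ⟨h1, h2⟩
    · rw [show liftR f RA (substFvar y t' (Term.app t₁ t₂)) (substFvar y s' (Term.app t₁ t₂))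
          = f (liftR f RA (substFvar y t' t₁) (substFvar y s' t₁))
              (liftR f RA (substFvar y t' t₂) (substFvar y s' t₂)) from rfl,
        substFvar_of_count_zero y t' t₁ h1, substFvar_of_count_zero y s' t₁ h1,
        liftR_refl f hone RA harefl, hone, ih₂ h2]
    · rw [show liftR f RA (substFvar y t' (Term.app t₁ t₂)) (substFvar y s' (Term.app t₁ t₂))
          = f (liftR f RA (substFvar y t' t₁) (substFvar y s' t₁))
              (liftR f RA (substFvar y t' t₂) (substFvar y s' t₂)) from rfl,
        substFvar_of_count_zero y t' t₂ h2, substFvar_of_count_zero y s' t₂ h2,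
        liftR_refl f hone RA harefl, hcomm, hone, ih₁ h1]
  | lam t ih =>
    simp only [countFvar] at hcount
    exact ih hcount
end

section
/- Let ∧ be a T-norm and R_A a fuzzy relation on the alphabet A. Let F ∈ V and let s be a term such that fvar F occurs in s and s ≠ fvar F. Then for every substitution σ whose range contains no bvar constructor, R(σ̂(fvar F), σ̂(s)) = 0; that is, the equation F ≃ s has no unifier of positive approximation degree (occurs-check). -/
/-- Size of a term. -/
def tsize {A V : Type} : Term A V → ℕ
  | .fvar _ => 1
  | .bvar _ => 1
  | .const _ => 1
  | .app t₁ t₂ => tsize t₁ + tsize t₂ + 1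
  | .lam t => tsize t + 1

theorem tsize_pos {A V : Type} (t : Term A V) : 1 ≤ tsize t := by
  cases t <;> simp [tsize] <;> omega

theorem f_zero_right
    (f : unitInterval → unitInterval → unitInterval)
    (hmono : ∀ x y z : unitInterval, x ≤ y → f x z ≤ f y z)
    (hone : ∀ x : unitInterval, f 1 x = x)
    (x : unitInterval) : f x 0 = 0 := by
  have h1 : f x 0 ≤ f 1 0 := hmono x 1 0 x.2.2
  rw [hone] at h1
  exact le_antisymm h1 (f x 0).2.1

theorem f_ne_zero
    (f : unitInterval → unitInterval → unitInterval)
    (hcomm : ∀ x y : unitInterval, f x y = f y x)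
    (hmono : ∀ x y z : unitInterval, x ≤ y → f x z ≤ f y z)
    (hone : ∀ x : unitInterval, f 1 x = x)
    (x y : unitInterval) (h : f x y ≠ 0) : x ≠ 0 ∧ y ≠ 0 := by
  constructor
  · rintro rfl
    rw [hcomm] at h
    exact h (f_zero_right f hmono hone y)
  · rintro rfl
    exact h (f_zero_right f hmono hone x)

theorem liftR_tsize {A V : Type} [DecidableEq V]
    (f : unitInterval → unitInterval → unitInterval)
    (hcomm : ∀ x y : unitInterval, f x y = f y x)
    (hmono : ∀ x y z : unitInterval, x ≤ y → f x z ≤ f y z)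
    (hone : ∀ x : unitInterval, f 1 x = x)
    (RA : A → A → unitInterval) :
    ∀ t s : Term A V, liftR f RA t s ≠ 0 → tsize t = tsize s := by
  intro t
  induction t with
  | fvar X => intro s h; cases s <;> simp [liftR, tsize] at h ⊢
  | bvar n => intro s h; cases s <;> simp [liftR, tsize] at h ⊢
  | const a => intro s h; cases s <;> simp [liftR, tsize] at h ⊢
  | app t₁ t₂ ih₁ ih₂ =>
    intro s h
    cases s <;> simp [liftR, tsize] at h ⊢
    case app s₁ s₂ =>
      obtain ⟨h₁, h₂⟩ := f_ne_zero f hcomm hmono hone _ _ h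
      rw [ih₁ s₁ h₁, ih₂ s₂ h₂]
  | lam t ih =>
    intro s h
    cases s <;> simp [liftR, tsize] at h ⊢
    case lam s => exact ih s h

theorem occurs_tsize_le {A V : Type} (F : V) (σ : V → Term A V) :
    ∀ s : Term A V, occursFvar F s →
      tsize (σ F) ≤ tsize (applySubst σ s) := by
  intro s
  induction s with
  | fvar X => rintro rfl; simp [applySubst]
  | bvar n => intro h; exact h.elim
  | const a => intro h; exact h.elim
  | app t₁ t₂ ih₁ ih₂ =>
    rintro (h | h) <;> simp only [applySubst, tsize]
    · have := ih₁ h; omega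
    · have := ih₂ h; omega
  | lam t ih =>
    intro h
    have := ih h
    simp only [applySubst, tsize]
    omega

/-- occurs-check: if `fvar F` occurs in `s` and `s ≠ fvar F`,
then for every substitution whose range contains no `bvar`, the instantiated
sides have similarity degree 0; i.e. the equation `F ≃ s` has no unifier of
positive approximation degree. -/
theorem liftR_occurs_check {A V : Type} [DecidableEq V]
    (f : unitInterval → unitInterval → unitInterval)
    (hassoc : ∀ x y z : unitInterval, f (f x y) z = f x (f y z))
    (hcomm : ∀ x y : unitInterval, f x y = f y x)
    (hmono : ∀ x y z : unitInterval, x ≤ y → f x z ≤ f y z)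
    (hone : ∀ x : unitInterval, f 1 x = x)
    (RA : A → A → unitInterval)
    (F : V) (s : Term A V)
    (hocc : occursFvar F s)
    (hne : s ≠ Term.fvar F) :
    ∀ σ : V → Term A V, (∀ X, noBvar (σ X)) →
      liftR f RA (applySubst σ (Term.fvar F)) (applySubst σ s) = 0 := by
  intro σ _
  by_contra h
  have hsz := liftR_tsize f hcomm hmono hone RA _ _ h
  simp only [applySubst] at hsz
  -- derive strict inequality tsize (σ F) < tsize (applySubst σ s)
  have hlt : tsize (σ F) < tsize (applySubst σ s) := by
    cases s with
    | fvar X =>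
      exact absurd (by simpa [occursFvar] using hocc ▸ rfl :
        (Term.fvar X : Term A V) = Term.fvar F) hne
    | bvar n => exact hocc.elim
    | const a => exact hocc.elim
    | app t₁ t₂ =>
      rcases hocc with hh | hh
      · have := occurs_tsize_le F σ t₁ hh
        have := tsize_pos (applySubst σ t₂)
        simp only [applySubst, tsize]; omega
      · have := occurs_tsize_le F σ t₂ hh
        have := tsize_pos (applySubst σ t₁)
        simp only [applySubst, tsize]; omega
    | lam t =>
      have := occurs_tsize_le F σ t hocc
      simp only [applySubst, tsize]; omega
  omega
end

section
/- Let ∧ be a T-norm and R_A a fuzzy relation on the alphabet A. Define the head of a term by head(app t₁ t₂) = head(t₁) and head(t) = t for all other constructors. If head(t) = const f and head(s) = const g, then for every substitution σ whose range contains no bvar constructor, R(σ̂(t), σ̂(s)) ≤ R_A(f, g). In particular, if R_A(f,g) < μ for a cut value μ ∈ (0,1], then t and s have no unifier of degree ≥ μ. -/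

theorem headT_applySubst {A V : Type} (σ : V → Term A V) (t : Term A V) (c : A)
    (h : headT t = Term.const c) : headT (applySubst σ t) = Term.const c := by
  induction t with
  | app t₁ t₂ ih₁ ih₂ => exact ih₁ h
  | fvar X => simp [headT] at h
  | bvar n => simp [headT] at h
  | const a => simpa [headT, applySubst] using h
  | lam t ih => simp [headT] at h

theorem f_le_left {f : unitInterval → unitInterval → unitInterval}
    (hcomm : ∀ x y : unitInterval, f x y = f y x)
    (hmono : ∀ x y z : unitInterval, x ≤ y → f x z ≤ f y z)
    (hone : ∀ x : unitInterval, f 1 x = x)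
    (x y : unitInterval) : f x y ≤ x := by
  calc f x y = f y x := hcomm x y
    _ ≤ f 1 x := hmono y 1 x y.2.2
    _ = x := hone x

theorem liftR_head_bound {A V : Type} [DecidableEq V]
    {f : unitInterval → unitInterval → unitInterval}
    (hcomm : ∀ x y : unitInterval, f x y = f y x)
    (hmono : ∀ x y z : unitInterval, x ≤ y → f x z ≤ f y z)
    (hone : ∀ x : unitInterval, f 1 x = x)
    (RA : A → A → unitInterval) (fc gc : A) :
    ∀ t s : Term A V, headT t = Term.const fc → headT s = Term.const gc →
      liftR f RA t s ≤ RA fc gc := by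
  intro t
  induction t with
  | app t₁ t₂ ih₁ ih₂ =>
    intro s ht hs
    cases s with
    | app s₁ s₂ =>
      calc liftR f RA (.app t₁ t₂) (.app s₁ s₂)
          = f (liftR f RA t₁ s₁) (liftR f RA t₂ s₂) := rfl
        _ ≤ liftR f RA t₁ s₁ := f_le_left hcomm hmono hone _ _
        _ ≤ RA fc gc := ih₁ s₁ ht hs
    | fvar X => simp only [liftR]; exact unitInterval.nonneg'
    | bvar n => simp only [liftR]; exact unitInterval.nonneg'
    | const a => simp only [liftR]; exact unitInterval.nonneg'
    | lam u => simp only [liftR]; exact unitInterval.nonneg'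
  | const a =>
    intro s ht hs
    cases ht
    cases s with
    | app s₁ s₂ => simp only [liftR]; exact unitInterval.nonneg'
    | fvar X => simp only [liftR]; exact unitInterval.nonneg'
    | bvar n => simp only [liftR]; exact unitInterval.nonneg'
    | const b => cases hs; exact le_rfl
    | lam u => simp only [liftR]; exact unitInterval.nonneg'
  | fvar X => intro s ht; simp [headT] at ht
  | bvar n => intro s ht; simp [headT] at ht
  | lam u ih => intro s ht; simp [headT] at ht

set_option linter.unusedVariables false in
/-- if the heads of `t` and `s` are the constants `fc` and `gc`,
then for any substitution (with bvar-free range) the similarity degree of the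
instances is at most `RA fc gc`; in particular if `RA fc gc < μ` for a cut
value `μ ∈ (0,1]`, then `t` and `s` have no unifier of degree ≥ μ. -/
theorem liftR_rigid_rigid_head_bound {A V : Type} [DecidableEq V]
    (f : unitInterval → unitInterval → unitInterval)
    (hassoc : ∀ x y z : unitInterval, f (f x y) z = f x (f y z))
    (hcomm : ∀ x y : unitInterval, f x y = f y x)
    (hmono : ∀ x y z : unitInterval, x ≤ y → f x z ≤ f y z)
    (hone : ∀ x : unitInterval, f 1 x = x)
    (RA : A → A → unitInterval)
    (t s : Term A V) (fc gc : A)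
    (ht : headT t = Term.const fc)
    (hs : headT s = Term.const gc) :
    (∀ σ : V → Term A V, (∀ X, noBvar (σ X)) →
      liftR f RA (applySubst σ t) (applySubst σ s) ≤ RA fc gc) ∧
    (∀ μ : unitInterval, 0 < μ → RA fc gc < μ →
      ¬ ∃ σ : V → Term A V, (∀ X, noBvar (σ X)) ∧
        μ ≤ liftR f RA (applySubst σ t) (applySubst σ s)) := by
  constructor
  · intro σ hσ
    exact liftR_head_bound hcomm hmono hone RA fc gc _ _
      (headT_applySubst σ t fc ht) (headT_applySubst σ s gc hs)
  · rintro μ hμ hlt ⟨σ, hσ, hge⟩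
    exact absurd (hge.trans (liftR_head_bound hcomm hmono hone RA fc gc _ _
      (headT_applySubst σ t fc ht) (headT_applySubst σ s gc hs))) (not_le.mpr hlt)
end

section
/- Let ∧ be an idempotent T-norm (x ∧ x = x for all x ∈ [0,1]) and R_A a proximity relation on the alphabet A. Then for all terms t and s with R(t,s) > 0, for every y ∈ V and all terms t', s' containing no bvar constructor, R(t[y := t'], s[y := s']) ≥ R(t,s) ∧ R(t',s'); in particular, if the same term u (with no bvar constructor) is substituted on both sides, R(t[y := u], s[y := u]) = R(t,s). -/
lemma aux_f_zero {A V : Type} [DecidableEq V]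
    (f : unitInterval → unitInterval → unitInterval)
    (hmono : ∀ x y z : unitInterval, x ≤ y → f x z ≤ f y z)
    (hone : ∀ x : unitInterval, f 1 x = x)
    (x : unitInterval) : f x 0 = 0 := by
  have h1 : f x 0 ≤ f 1 0 := hmono _ _ _ unitInterval.le_one'
  rw [hone] at h1
  exact le_antisymm h1 unitInterval.nonneg'

lemma aux_f_pos
    (f : unitInterval → unitInterval → unitInterval)
    (hcomm : ∀ x y : unitInterval, f x y = f y x)
    (hmono : ∀ x y z : unitInterval, x ≤ y → f x z ≤ f y z)
    (hone : ∀ x : unitInterval, f 1 x = x)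
    {a b : unitInterval} (h : 0 < f a b) : 0 < a ∧ 0 < b := by
  constructor
  · rcases eq_or_lt_of_le (unitInterval.nonneg' : (0:unitInterval) ≤ a) with h0 | h0
    · rw [← h0, hcomm, aux_f_zero (A:=Empty) (V:=Empty) f hmono hone] at h; exact absurd h (lt_irrefl _)
    · exact h0
  · rcases eq_or_lt_of_le (unitInterval.nonneg' : (0:unitInterval) ≤ b) with h0 | h0
    · rw [← h0, aux_f_zero (A:=Empty) (V:=Empty) f hmono hone] at h; exact absurd h (lt_irrefl _)
    · exact h0

lemma aux_f_le_left
    (f : unitInterval → unitInterval → unitInterval)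
    (hcomm : ∀ x y : unitInterval, f x y = f y x)
    (hmono : ∀ x y z : unitInterval, x ≤ y → f x z ≤ f y z)
    (hone : ∀ x : unitInterval, f 1 x = x)
    (x y : unitInterval) : f x y ≤ x := by
  calc f x y = f y x := hcomm x y
    _ ≤ f 1 x := hmono _ _ _ unitInterval.le_one'
    _ = x := hone x

lemma aux_liftR_refl {A V : Type} [DecidableEq V]
    (f : unitInterval → unitInterval → unitInterval)
    (hone : ∀ x : unitInterval, f 1 x = x)
    (RA : A → A → unitInterval)
    (harefl : ∀ a, RA a a = 1)
    (t : Term A V) : liftR f RA t t = 1 := by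
  induction t with
  | fvar X => simp [liftR]
  | bvar n => simp [liftR]
  | const a => simp [liftR, harefl]
  | app t₁ t₂ ih₁ ih₂ => simp [liftR, ih₁, ih₂, hone]
  | lam t ih => simpa [liftR] using ih

lemma aux_main {A V : Type} [DecidableEq V]
    (f : unitInterval → unitInterval → unitInterval)
    (hassoc : ∀ x y z : unitInterval, f (f x y) z = f x (f y z))
    (hcomm : ∀ x y : unitInterval, f x y = f y x)
    (hmono : ∀ x y z : unitInterval, x ≤ y → f x z ≤ f y z)
    (hone : ∀ x : unitInterval, f 1 x = x)
    (hidem : ∀ x : unitInterval, f x x = x)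
    (RA : A → A → unitInterval)
    (t s : Term A V) (h : 0 < liftR f RA t s)
    (y : V) (t' s' : Term A V) :
    f (liftR f RA t s) (liftR f RA t' s') ≤
      liftR f RA (substFvar y t' t) (substFvar y s' s) := by
  induction t generalizing s with
  | fvar X =>
    cases s with
    | fvar Y =>
      by_cases hXY : X = Y
      · subst hXY
        by_cases hXy : X = y
        · subst hXy
          simp only [liftR, substFvar, if_pos rfl, if_true, eq_self_iff_true, hone]
          exact le_of_eq rfl
        · simp only [liftR, substFvar, if_neg hXy, if_pos rfl, hone]
          exact unitInterval.le_one'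
      · simp [liftR, hXY] at h
    | bvar n => simp [liftR] at h
    | const a => simp [liftR] at h
    | app s₁ s₂ => simp [liftR] at h
    | lam s => simp [liftR] at h
  | bvar n =>
    cases s with
    | fvar Y => simp [liftR] at h
    | bvar m =>
      by_cases hnm : n = m
      · subst hnm
        simp only [liftR, substFvar, if_pos rfl, hone]
        exact unitInterval.le_one'
      · simp [liftR, hnm] at h
    | const a => simp [liftR] at h
    | app s₁ s₂ => simp [liftR] at h
    | lam s => simp [liftR] at h
  | const a =>
    cases s with
    | fvar Y => simp [liftR] at h
    | bvar m => simp [liftR] at h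
    | const b =>
      simp only [liftR, substFvar]
      exact aux_f_le_left f hcomm hmono hone _ _
    | app s₁ s₂ => simp [liftR] at h
    | lam s => simp [liftR] at h
  | app t₁ t₂ ih₁ ih₂ =>
    cases s with
    | fvar Y => simp [liftR] at h
    | bvar m => simp [liftR] at h
    | const b => simp [liftR] at h
    | app s₁ s₂ =>
      have h' : 0 < f (liftR f RA t₁ s₁) (liftR f RA t₂ s₂) := h
      obtain ⟨h1, h2⟩ := aux_f_pos f hcomm hmono hone h'
      have i1 := ih₁ s₁ h1
      have i2 := ih₂ s₂ h2
      simp only [liftR, substFvar]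
      set r₁ := liftR f RA t₁ s₁
      set r₂ := liftR f RA t₂ s₂
      set p := liftR f RA t' s'
      have key : f (f r₁ r₂) p = f (f r₁ p) (f r₂ p) := by
        conv_lhs => rw [← hidem p]
        rw [hassoc r₁ r₂, ← hassoc r₂ p p, hcomm r₂ p, hassoc p r₂ p, ← hassoc r₁ p]
        exact congrArg (f (f r₁ p)) (hcomm r₂ p)
      rw [key]
      calc f (f r₁ p) (f r₂ p)
          ≤ f (liftR f RA (substFvar y t' t₁) (substFvar y s' s₁)) (f r₂ p) :=
            hmono _ _ _ i1
        _ = f (f r₂ p) (liftR f RA (substFvar y t' t₁) (substFvar y s' s₁)) :=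
            hcomm _ _
        _ ≤ f (liftR f RA (substFvar y t' t₂) (substFvar y s' s₂))
              (liftR f RA (substFvar y t' t₁) (substFvar y s' s₁)) :=
            hmono _ _ _ i2
        _ = _ := hcomm _ _
    | lam s => simp [liftR] at h
  | lam t ih =>
    cases s with
    | fvar Y => simp [liftR] at h
    | bvar m => simp [liftR] at h
    | const b => simp [liftR] at h
    | app s₁ s₂ => simp [liftR] at h
    | lam s =>
      have h' : 0 < liftR f RA t s := h
      simpa only [liftR, substFvar] using ih s h'

lemma aux_eq {A V : Type} [DecidableEq V]
    (f : unitInterval → unitInterval → unitInterval)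
    (hcomm : ∀ x y : unitInterval, f x y = f y x)
    (hmono : ∀ x y z : unitInterval, x ≤ y → f x z ≤ f y z)
    (hone : ∀ x : unitInterval, f 1 x = x)
    (RA : A → A → unitInterval)
    (harefl : ∀ a, RA a a = 1)
    (t s : Term A V) (h : 0 < liftR f RA t s)
    (y : V) (u : Term A V) :
    liftR f RA (substFvar y u t) (substFvar y u s) = liftR f RA t s := by
  induction t generalizing s with
  | fvar X =>
    cases s with
    | fvar Y =>
      by_cases hXY : X = Y
      · subst hXY
        by_cases hXy : X = y
        · subst hXy
          simp [liftR, substFvar, aux_liftR_refl f hone RA harefl]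
        · simp [liftR, substFvar, hXy]
      · simp [liftR, hXY] at h
    | bvar n => simp [liftR] at h
    | const a => simp [liftR] at h
    | app s₁ s₂ => simp [liftR] at h
    | lam s => simp [liftR] at h
  | bvar n =>
    cases s with
    | fvar Y => simp [liftR] at h
    | bvar m => simp [liftR, substFvar]
    | const a => simp [liftR] at h
    | app s₁ s₂ => simp [liftR] at h
    | lam s => simp [liftR] at h
  | const a =>
    cases s with
    | fvar Y => simp [liftR] at h
    | bvar m => simp [liftR] at h
    | const b => simp [liftR, substFvar]
    | app s₁ s₂ => simp [liftR] at h
    | lam s => simp [liftR] at h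
  | app t₁ t₂ ih₁ ih₂ =>
    cases s with
    | fvar Y => simp [liftR] at h
    | bvar m => simp [liftR] at h
    | const b => simp [liftR] at h
    | app s₁ s₂ =>
      have h' : 0 < f (liftR f RA t₁ s₁) (liftR f RA t₂ s₂) := h
      obtain ⟨h1, h2⟩ := aux_f_pos f hcomm hmono hone h'
      simp only [liftR, substFvar, ih₁ s₁ h1, ih₂ s₂ h2]
    | lam s => simp [liftR] at h
  | lam t ih =>
    cases s with
    | fvar Y => simp [liftR] at h
    | bvar m => simp [liftR] at h
    | const b => simp [liftR] at h
    | app s₁ s₂ => simp [liftR] at h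
    | lam s =>
      have h' : 0 < liftR f RA t s := h
      simpa only [liftR, substFvar] using ih s h'

/-- for an idempotent T-norm and a proximity relation `RA`, if
`R(t,s) > 0` then instantiating a variable `y` by bvar-free terms `t'`, `s'`
gives `R(t[y:=t'], s[y:=s']) ≥ R(t,s) ∧ R(t',s')`; in particular, substituting
the same bvar-free term `u` on both sides leaves the degree unchanged. -/
theorem liftR_instantiation_idempotent {A V : Type} [DecidableEq V]
    (f : unitInterval → unitInterval → unitInterval)
    (hassoc : ∀ x y z : unitInterval, f (f x y) z = f x (f y z))
    (hcomm : ∀ x y : unitInterval, f x y = f y x)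
    (hmono : ∀ x y z : unitInterval, x ≤ y → f x z ≤ f y z)
    (hone : ∀ x : unitInterval, f 1 x = x)
    (hidem : ∀ x : unitInterval, f x x = x)
    (RA : A → A → unitInterval)
    (harefl : ∀ a, RA a a = 1)
    (hasymm : ∀ a b, RA a b = RA b a)
    (t s : Term A V)
    (h : 0 < liftR f RA t s) :
    (∀ (y : V) (t' s' : Term A V), noBvar t' → noBvar s' →
      f (liftR f RA t s) (liftR f RA t' s') ≤
        liftR f RA (substFvar y t' t) (substFvar y s' s)) ∧
    (∀ (y : V) (u : Term A V), noBvar u →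
      liftR f RA (substFvar y u t) (substFvar y u s) = liftR f RA t s) := by
  constructor
  · intro y t' s' _ _
    exact aux_main f hassoc hcomm hmono hone hidem RA t s h y t' s'
  · intro y u _
    exact aux_eq f hcomm hmono hone RA harefl t s h y u
end
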